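/- Let C, C₁, C₂, … be Archimedean copulas with (normalized, right-continuous at 0) generators φ, φ₁, φ₂, … such that (φ_n) converges pointwise to φ on (0,1] and, in addition, lim_{n→∞} φ_n(0) = φ(0) (in [0,∞]). Then the 0-level functions converge pointwise: lim_{n→∞} f_n^0(x) = f^0(x) for all x ∈ [0,1]. -/

import Mathlib

open MeasureTheory Filter Set
open scoped ENNReal

noncomputable section

/-- Right-hand derivative (of a convex function on `[0,1]`) of `f` at `x`, realized as the
infimum of the forward difference quotients with right endpoint in `(x, 1]`. -/
noncomputable def rightD (f : ℝ → ℝ) (x : ℝ) : ℝ :=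
  sInf ((fun y => (f y - f x) / (y - x)) '' Set.Ioc x 1)

/-- `φ : [0,1] → [0,∞]` is a (normalized, right-continuous at `0`) generator of an
Archimedean copula: convex, strictly decreasing, `φ 1 = 0`, finite on `(0,1]`,
right-continuous at `0` and normalized by `φ (1/2) = 1`. -/
structure IsGenerator (φ : ℝ → ℝ≥0∞) : Prop where
  convex : ∀ x ∈ Set.Icc (0:ℝ) 1, ∀ y ∈ Set.Icc (0:ℝ) 1, ∀ t ∈ Set.Icc (0:ℝ) 1,
    φ (t * x + (1 - t) * y) ≤ ENNReal.ofReal t * φ x + ENNReal.ofReal (1 - t) * φ y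
  strict_anti : ∀ x ∈ Set.Icc (0:ℝ) 1, ∀ y ∈ Set.Icc (0:ℝ) 1, x < y → φ y < φ x
  map_one : φ 1 = 0
  finite : ∀ x ∈ Set.Ioc (0:ℝ) 1, φ x < ⊤
  rightCont_zero : Filter.Tendsto φ (nhdsWithin 0 (Set.Ioi 0)) (nhds (φ 0))
  normalized : φ (1/2) = 1

/-- Pseudo-inverse `φ⁻` of a generator: `φ⁻ s = φ⁻¹ s` for `s < φ 0` and `0` for `s ≥ φ 0`. -/
noncomputable def pseudoInv (φ : ℝ → ℝ≥0∞) (s : ℝ≥0∞) : ℝ :=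
  sSup {x | x ∈ Set.Icc (0:ℝ) 1 ∧ s ≤ φ x}

/-- The Archimedean copula generated by `φ`: `C(x,y) = φ⁻(φ x + φ y)`. -/
noncomputable def archCopula (φ : ℝ → ℝ≥0∞) (x y : ℝ) : ℝ :=
  pseudoInv φ (φ x + φ y)

/-- The right-hand derivative `D⁺φ` of a generator. -/
noncomputable def Dplus (φ : ℝ → ℝ≥0∞) (x : ℝ) : ℝ :=
  rightD (fun t => (φ t).toReal) x

/-- The set `Cont(D⁺φ)` of continuity points of `D⁺φ` in `(0,1)`. -/
def ContD (φ : ℝ → ℝ≥0∞) : Set ℝ :=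
  {x | x ∈ Set.Ioo (0:ℝ) 1 ∧ ContinuousAt (Dplus φ) x}

/-- The `t`-level function `f^t(x) = φ⁻(φ t − φ x)` of the Archimedean copula generated
by `φ`. -/
noncomputable def levelFn (φ : ℝ → ℝ≥0∞) (t x : ℝ) : ℝ :=
  pseudoInv φ (φ t - φ x)

/-- The Kendall distribution function `F^Kendall(x) = x − φ(x)/D⁺φ(x)` of the Archimedean
copula generated by `φ`. -/
noncomputable def kendall (φ : ℝ → ℝ≥0∞) (x : ℝ) : ℝ :=
  x - (φ x).toReal / Dplus φ x

/-- The Markov kernel (as conditional distribution function `(x,y) ↦ K_C(x,[0,y])`) of the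
Archimedean copula generated by `φ`. -/
noncomputable def archKernel (φ : ℝ → ℝ≥0∞) (x y : ℝ) : ℝ :=
  if x = 0 ∨ x = 1 then 1
  else if y < levelFn φ 0 x then 0
  else Dplus φ x / Dplus φ (archCopula φ x y)

/-- The metric `D₁` between two copulas, expressed via their conditional distribution
functions `K₁, K₂` (with `Kᵢ x y = K_{Cᵢ}(x,[0,y])`). -/
noncomputable def D1 (K1 K2 : ℝ → ℝ → ℝ) : ℝ :=
  ∫ y in Set.Icc (0:ℝ) 1, ∫ x in Set.Icc (0:ℝ) 1, |K1 x y - K2 x y|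

/-- Conditional distribution function of the independence copula `Π`. -/
def piKernel : ℝ → ℝ → ℝ := fun _ y => y

/-- Dependence measure `ζ₁(C) = 3 D₁(C, Π)`. -/
noncomputable def zeta1 (K : ℝ → ℝ → ℝ) : ℝ := 3 * D1 K piKernel

/-- Dependence measure `r(C) = 6 ∫∫ K_C(x,[0,y])² dλ(x) dλ(y) − 2`. -/
noncomputable def rdep (K : ℝ → ℝ → ℝ) : ℝ :=
  6 * (∫ y in Set.Icc (0:ℝ) 1, ∫ x in Set.Icc (0:ℝ) 1, (K x y) ^ 2) - 2

/-- Weak conditional convergence of a sequence of copulas, in terms of their conditional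
distribution functions: for λ-a.e. `x ∈ [0,1]` the measures `K_{C_n}(x,·)` converge weakly
to `K_C(x,·)`, i.e. the conditional distribution functions converge at every continuity
point of `y ↦ K_C(x,[0,y])` in `[0,1]`. -/
def WeakCondConv (Kseq : ℕ → ℝ → ℝ → ℝ) (K : ℝ → ℝ → ℝ) : Prop :=
  ∀ᵐ x ∂(volume.restrict (Set.Icc (0:ℝ) 1)),
    ∀ y ∈ Set.Icc (0:ℝ) 1, ContinuousWithinAt (fun t => K x t) (Set.Icc 0 1) y →
      Filter.Tendsto (fun n => Kseq n x y) Filter.atTop (nhds (K x y))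


/-!
The pseudo-inverse `φ⁻ s = sup {z ∈ [0,1] | s ≤ φ z}` depends continuously on `(φ, s)` at
a strictly decreasing `φ`: if `φ⁻ s` lies strictly between `a` and `b`, then `φ b < s < φ a`
at the points involved, and these strict inequalities persist for `φ_n` and `s_n` for large
`n`, which traps `φ_n⁻ s_n` between `a` and `b` by monotonicity. For the level function at
level `0` the arguments are `s_n = φ_n 0 - φ_n x`, and they converge because `φ_n 0 → φ 0`.
-/

open Topology

section PseudoInv

variable {ψ : ℝ → ℝ≥0∞} {s : ℝ≥0∞} {c : ℝ}

lemma pseudoInv_nonneg (ψ : ℝ → ℝ≥0∞) (s : ℝ≥0∞) : 0 ≤ pseudoInv ψ s :=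
  Real.sSup_nonneg fun _ hz => hz.1.1

lemma pseudoInv_le_one (ψ : ℝ → ℝ≥0∞) (s : ℝ≥0∞) : pseudoInv ψ s ≤ 1 :=
  Real.sSup_le (fun _ hz => hz.1.2) zero_le_one

lemma le_pseudoInv (hc : c ∈ Icc (0:ℝ) 1) (hsc : s ≤ ψ c) : c ≤ pseudoInv ψ s :=
  le_csSup (bddAbove_Icc.mono fun _ hz => hz.1) ⟨hc, hsc⟩

lemma pseudoInv_le_of_lt (hψ : AntitoneOn ψ (Icc 0 1)) (hc : c ∈ Icc (0:ℝ) 1)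
    (hcs : ψ c < s) : pseudoInv ψ s ≤ c := by
  refine Real.sSup_le (fun z ⟨hz, hsz⟩ => ?_) hc.1
  by_contra! hcz
  exact (hsz.trans (hψ hc hz hcz.le)).not_gt hcs

lemma lt_of_lt_pseudoInv (hψ : StrictAntiOn ψ (Icc 0 1)) (hc : 0 ≤ c)
    (hcs : c < pseudoInv ψ s) : s < ψ c := by
  have hne : {z | z ∈ Icc (0:ℝ) 1 ∧ s ≤ ψ z}.Nonempty := by
    by_contra! hempty
    rw [pseudoInv, hempty, Real.sSup_empty] at hcs
    exact hcs.not_ge hc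
  obtain ⟨z, ⟨hz, hsz⟩, hcz⟩ := exists_lt_of_lt_csSup hne hcs
  exact hsz.trans_lt (hψ ⟨hc, hcz.le.trans hz.2⟩ hz hcz)

lemma lt_of_pseudoInv_lt (hc : c ∈ Icc (0:ℝ) 1) (hsc : pseudoInv ψ s < c) : ψ c < s :=
  not_le.mp fun hle => (le_pseudoInv hc hle).not_gt hsc

theorem tendsto_pseudoInv {ι : Type*} {l : Filter ι} {ψs : ι → ℝ → ℝ≥0∞} {ss : ι → ℝ≥0∞}
    (hψ : StrictAntiOn ψ (Icc 0 1)) (hψs : ∀ i, AntitoneOn (ψs i) (Icc 0 1))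
    (hconv : ∀ c ∈ Ioc (0:ℝ) 1, Tendsto (fun i => ψs i c) l (𝓝 (ψ c)))
    (hs : Tendsto ss l (𝓝 s)) :
    Tendsto (fun i => pseudoInv (ψs i) (ss i)) l (𝓝 (pseudoInv ψ s)) := by
  rw [tendsto_order]
  constructor
  · intro a ha
    obtain ⟨c, hac, hc⟩ := exists_between ha
    rcases le_or_gt c 0 with hc0 | hc0
    · exact .of_forall fun i => (hac.trans_le hc0).trans_le (pseudoInv_nonneg _ _)
    have hcI : c ∈ Icc (0:ℝ) 1 := ⟨hc0.le, hc.le.trans (pseudoInv_le_one _ _)⟩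
    filter_upwards [hs.eventually_lt (hconv c ⟨hc0, hcI.2⟩) (lt_of_lt_pseudoInv hψ hc0.le hc)]
      with i hi
    exact hac.trans_le (le_pseudoInv hcI hi.le)
  · intro b hb
    obtain ⟨c, hc, hcb⟩ := exists_between hb
    rcases le_or_gt c 1 with hc1 | hc1
    swap
    · exact .of_forall fun i => (pseudoInv_le_one _ _).trans_lt (hc1.trans hcb)
    have hc0 : 0 < c := (pseudoInv_nonneg _ _).trans_lt hc
    have hcI : c ∈ Icc (0:ℝ) 1 := ⟨hc0.le, hc1⟩
    filter_upwards [(hconv c ⟨hc0, hc1⟩).eventually_lt hs (lt_of_pseudoInv_lt hcI hc)]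
      with i hi
    exact (pseudoInv_le_of_lt (hψs i) hcI hi).trans_lt hcb

end PseudoInv

/-- For Archimedean copulas whose generators converge pointwise on
`(0,1]` and additionally satisfy `φ_n(0) → φ(0)` (in `[0,∞]`), the `0`-level functions
converge pointwise on `[0,1]`. -/
theorem stmt7 (φ : ℝ → ℝ≥0∞) (φseq : ℕ → ℝ → ℝ≥0∞)
    (hφ : IsGenerator φ) (hφseq : ∀ n, IsGenerator (φseq n))
    (hconv : ∀ x ∈ Set.Ioc (0:ℝ) 1,
      Filter.Tendsto (fun n => φseq n x) Filter.atTop (nhds (φ x)))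
    (hconv0 : Filter.Tendsto (fun n => φseq n 0) Filter.atTop (nhds (φ 0))) :
    ∀ x ∈ Set.Icc (0:ℝ) 1,
      Filter.Tendsto (fun n => levelFn (φseq n) 0 x) Filter.atTop
        (nhds (levelFn φ 0 x)) := by
  intro x hx
  have hs : Tendsto (fun n => φseq n 0 - φseq n x) atTop (𝓝 (φ 0 - φ x)) := by
    rcases hx.1.eq_or_lt with rfl | hx0
    · simpa only [tsub_self] using tendsto_const_nhds
    · have hxI : x ∈ Ioc (0:ℝ) 1 := ⟨hx0, hx.2⟩
      exact ENNReal.Tendsto.sub hconv0 (hconv x hxI) (.inr (hφ.finite x hxI).ne)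
  exact tendsto_pseudoInv hφ.strict_anti
    (fun n => StrictAntiOn.antitoneOn (hφseq n).strict_anti) hconv hs
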